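/- Let φ₀: E₁ → E₀ and φ₁: E₂ → E₁ be separable isogenies of degrees ℓ₀ and ℓ₁ over a finite field k, such that every prime factor of ℓ₁ divides ℓ₀. Fix P ∈ E₀(k̄), and assume ker(φ₀ ∘ φ₁) is cyclic with all its points k(P)-rational. Then every point Q ∈ (φ₀ ∘ φ₁)⁻¹(P) satisfying [k(φ₁(Q)) : k(P)] = ℓ₀ also satisfies [k(Q) : k(P)] = ℓ₀ℓ₁. -/

import Mathlib

open WeierstrassCurve WeierstrassCurve.Affine IntermediateField
open scoped Classical

noncomputable section

/-- The algebraic closure of `k`, where points of our curves live. -/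
abbrev kbar (k : Type) [Field k] := AlgebraicClosure k

variable {k : Type} [Field k]

/-- The field of definition `k(P)` of a point `P` on a Weierstrass curve, as an
intermediate field of `k̄/k`: the subfield generated by the coordinates of `P`. -/
def ptField (W : WeierstrassCurve k) : (W.toAffine.baseChange (kbar k)).Point → IntermediateField k (kbar k)
  | .zero => ⊥
  | .some (x := x) (y := y) _ => adjoin k {x, y}

/-- The degree `[E⊔F : E]` of the compositum of two intermediate fields over the first;
when `E ≤ E⊔F = F` this is the degree `[F : E]`. -/
def extDeg {k K : Type*} [Field k] [Field K] [Algebra k K]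
    (E F : IntermediateField k K) : ℕ :=
  Module.finrank E (IntermediateField.extendScalars (le_sup_left : E ≤ E ⊔ F))

/-- A separable isogeny of degree `ℓ` between (the groups of `k̄`-points of) two
Weierstrass curves defined over a finite field `k`, encoded by its action on points:
a surjective group homomorphism, commuting with the Galois action (defined over `k`),
whose kernel has exactly `ℓ` elements (for an isogeny of degree `ℓ`, separability is
equivalent to the kernel having `ℓ` geometric points). -/
structure SepIsogeny (W₁ W₀ : WeierstrassCurve k) (ℓ : ℕ) : Type where
  hom : (W₁.toAffine.baseChange (kbar k)).Point →+ (W₀.toAffine.baseChange (kbar k)).Point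
  surj : Function.Surjective hom
  card_ker : Nat.card hom.ker = ℓ
  equivariant : ∀ σ : kbar k →ₐ[k] kbar k, ∀ P, hom (Point.map (W' := W₁.toAffine) σ P) = Point.map (W' := W₀.toAffine) σ (hom P)

end

/-!
Let `L = k(P)`. Every `σ ∈ Gal(k̄/L)` fixes `P` and, by hypothesis, fixes `K = ker (φ₀ ∘ φ₁)`
pointwise, so `σ ↦ σQ - Q` is a homomorphism `c : Gal(k̄/L) → K`. The orbit of `Q` has
`[L(Q) : L]` elements and is the translate by `Q` of the image `H` of `c`; likewise the orbit
of `φ₁ Q` is a translate of `φ₁(H)`. The degree hypothesis therefore says `|φ₁(H)| = ℓ₀ = |φ₁(K)|`,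
i.e. `H + ker φ₁ = K`. In the cyclic group `K` of order `ℓ₀ℓ₁` this forces
`ℓ₀ℓ₁ ∣ lcm(|H|, ℓ₁)`, and since every prime factor of `ℓ₁` divides `ℓ₀`, `|H| = ℓ₀ℓ₁`.
-/

theorem Nat.ne_zero_of_forall_prime_dvd_imp_dvd {a b : ℕ} (ha : a ≠ 0)
    (hab : ∀ p : ℕ, p.Prime → p ∣ b → p ∣ a) : b ≠ 0 := by
  rintro rfl
  obtain ⟨p, hpa, hp⟩ := Nat.exists_infinite_primes (a + 1)
  have := Nat.le_of_dvd (Nat.pos_of_ne_zero ha) (hab p hp (dvd_zero p))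
  omega

theorem Nat.eq_of_dvd_of_mul_dvd_lcm {a b d : ℕ} (ha : a ≠ 0) (hb : b ≠ 0)
    (hab : ∀ p : ℕ, p.Prime → p ∣ b → p ∣ a) (hd : d ∣ a * b) (h : a * b ∣ Nat.lcm d b) :
    d = a * b := by
  have hd0 : d ≠ 0 := ne_zero_of_dvd_ne_zero (mul_ne_zero ha hb) hd
  refine Nat.dvd_antisymm hd
    ((Nat.factorization_le_iff_dvd (mul_ne_zero ha hb) hd0).mp fun p => ?_)
  have hp := (Nat.factorization_le_iff_dvd (mul_ne_zero ha hb) (Nat.lcm_ne_zero hd0 hb)).mpr h p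
  rw [Nat.factorization_lcm hd0 hb, Finsupp.sup_apply, le_sup_iff] at hp
  rw [Nat.factorization_mul ha hb, Finsupp.add_apply] at hp ⊢
  rcases Nat.eq_zero_or_pos (b.factorization p) with hbp | hbp
  · omega
  · -- `p ∣ b`, hence `p ∣ a`, so `v_p(ab) > v_p(b)` and the maximum must be `v_p(d)`
    have hp : p.Prime := Nat.prime_of_mem_primeFactors (Finsupp.mem_support_iff.mpr hbp.ne')
    have hpa := hp.factorization_pos_of_dvd ha (hab p hp (Nat.dvd_of_factorization_pos hbp.ne'))
    omega

theorem Nat.card_range_eq_of_forall_eq_iff {α β γ : Type*} {f : α → β} {g : α → γ}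
    (h : ∀ a b, f a = f b ↔ g a = g b) : Nat.card (Set.range f) = Nat.card (Set.range g) := by
  have hker : Setoid.ker f = Setoid.ker g := Setoid.ext h
  rw [← Nat.card_congr (Setoid.quotientKerEquivRange f),
    ← Nat.card_congr (Setoid.quotientKerEquivRange g), hker]

namespace AddSubgroup

theorem card_eq_card_map_mul_card_ker {A B : Type*} [AddGroup A] [AddGroup B]
    (f : A →+ B) {K : AddSubgroup A} (hker : f.ker ≤ K) :
    Nat.card K = Nat.card (K.map f) * Nat.card f.ker := by
  rw [card_eq_card_quotient_mul_card_addSubgroup (f.domRestrict K).ker,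
    Nat.card_congr (QuotientAddGroup.quotientKerEquivRange _).toEquiv,
    AddMonoidHom.domRestrict_range, AddMonoidHom.ker_domRestrict,
    Nat.card_congr (addSubgroupOfEquivOfLe hker).toEquiv]

theorem card_dvd_lcm_of_le_sup {A : Type*} [AddCommGroup A] {H N K : AddSubgroup A}
    [IsAddCyclic K] (hK : K ≤ H ⊔ N) : Nat.card K ∣ Nat.lcm (Nat.card H) (Nat.card N) := by
  rw [← IsAddCyclic.exponent_eq_card]
  refine AddMonoid.exponent_dvd_of_forall_nsmul_eq_zero fun x => Subtype.ext ?_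
  obtain ⟨h, hh, n, hn, hx⟩ := mem_sup.mp (hK x.2)
  rw [coe_nsmul, ← hx, smul_add,
    addOrderOf_dvd_iff_nsmul_eq_zero.mp ((H.addOrderOf_dvd_natCard hh).trans (Nat.dvd_lcm_left ..)),
    addOrderOf_dvd_iff_nsmul_eq_zero.mp ((N.addOrderOf_dvd_natCard hn).trans (Nat.dvd_lcm_right ..)),
    add_zero, coe_zero]

theorem eq_of_card_map_ge_of_isAddCyclic {A B : Type*} [AddCommGroup A] [AddGroup B]
    (f : A →+ B) {H K : AddSubgroup A} [IsAddCyclic K] [Finite K] (hHK : H ≤ K)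
    (hker : f.ker ≤ K) (hmap : Nat.card (K.map f) ≤ Nat.card (H.map f))
    (hdvd : ∀ p : ℕ, p.Prime → p ∣ Nat.card f.ker → p ∣ Nat.card (K.map f)) : H = K := by
  have : Finite (K.map f) := ((K : Set A).toFinite.image f).to_subtype
  have hcard := card_eq_card_map_mul_card_ker f hker
  have hsup : K ≤ H ⊔ f.ker :=
    le_sup_left.trans (map_eq_map_iff.mp (eq_of_le_of_card_ge (map_mono hHK) hmap)).ge
  have : Finite f.ker := Finite.of_injective _ (inclusion_injective hker)
  have hH : Nat.card H = Nat.card (K.map f) * Nat.card f.ker :=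
    Nat.eq_of_dvd_of_mul_dvd_lcm Nat.card_pos.ne' Nat.card_pos.ne' hdvd
      (hcard ▸ card_dvd_of_le hHK) (hcard ▸ card_dvd_lcm_of_le_sup hsup)
  exact eq_of_le_of_card_ge hHK (by rw [hcard, hH])

end AddSubgroup

section SmulSubHom

variable {G A B : Type*} [Group G] [AddCommGroup A] [DistribMulAction G A]

def smulSubHom (Q : A) (hQ : ∀ g h : G, g • (h • Q - Q) = h • Q - Q) : Additive G →+ A where
  toFun g := g.toMul • Q - Q
  map_zero' := by rw [toMul_zero, one_smul, sub_self]
  map_add' g h := by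
    rw [toMul_add, mul_smul, ← hQ g.toMul h.toMul, smul_sub]
    abel

theorem natCard_orbit_map_eq [AddCommGroup B] [MulAction G B] (Q : A)
    (hQ : ∀ g h : G, g • (h • Q - Q) = h • Q - Q) (f : A →+ B)
    (hf : ∀ (g : G) (x : A), f (g • x) = g • f x) :
    Nat.card (MulAction.orbit G (f Q)) = Nat.card ((smulSubHom Q hQ).range.map f) := by
  have hsmul : ∀ g : G, g • f Q = f (smulSubHom Q hQ (.ofMul g)) + f Q := fun g => by
    rw [← hf, ← map_add]
    exact congrArg f (sub_add_cancel _ _).symm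
  rw [← AddMonoidHom.range_comp]
  exact Nat.card_range_eq_of_forall_eq_iff fun g h => by rw [hsmul, hsmul, add_left_inj]; rfl

theorem natCard_orbit_eq_natCard_range (Q : A) (hQ : ∀ g h : G, g • (h • Q - Q) = h • Q - Q) :
    Nat.card (MulAction.orbit G Q) = Nat.card (smulSubHom Q hQ).range := by
  simpa using natCard_orbit_map_eq Q hQ (AddMonoidHom.id A) fun _ _ => rfl

end SmulSubHom

theorem IntermediateField.eqOn_adjoin_iff {F E K : Type*} [Field F] [Field E] [Algebra F E]
    [Semiring K] [Algebra F K] {f g : E →ₐ[F] K} {s : Set E} :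
    Set.EqOn f g (adjoin F s) ↔ Set.EqOn f g s :=
  ⟨fun h => h.mono (subset_adjoin F s), fun h x hx =>
    DFunLike.congr_fun (adjoin_algHom_ext F (φ₁ := f.comp (adjoin F s).val)
      (φ₂ := g.comp (adjoin F s).val) fun _ hy => h hy) ⟨x, hx⟩⟩

instance IntermediateField.finiteDimensional_extendScalars_sup {F E : Type*} [Field F] [Field E]
    [Algebra F E] (L M : IntermediateField F E) [FiniteDimensional F L] [FiniteDimensional F M] :
    FiniteDimensional L (extendScalars (le_sup_left : L ≤ L ⊔ M)) :=
  have : FiniteDimensional F (extendScalars (le_sup_left : L ≤ L ⊔ M)) :=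
    inferInstanceAs (FiniteDimensional F ↥(L ⊔ M))
  FiniteDimensional.right F L _

theorem extDeg_pos {F E : Type*} [Field F] [Field E] [Algebra F E] (L M : IntermediateField F E)
    [FiniteDimensional F L] [FiniteDimensional F M] : 0 < extDeg L M :=
  Module.finrank_pos

theorem AlgEquiv.comp_val_surjective {L Ω : Type*} [Field L] [Field Ω] [Algebra L Ω]
    [IsAlgClosure L Ω] (M : IntermediateField L Ω) :
    Function.Surjective fun σ : Gal(Ω/L) => (σ : Ω →ₐ[L] Ω).comp M.val := by
  intro f
  refine ⟨AlgEquiv.ofBijective _ (Algebra.IsAlgebraic.algHom_bijective (f.liftNormal Ω)), ?_⟩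
  ext m
  exact AlgHom.liftNormal_commutes f Ω m

theorem AlgEquiv.natCard_range_comp_val {L Ω : Type*} [Field L] [Field Ω] [Algebra L Ω]
    [IsAlgClosure L Ω] (M : IntermediateField L Ω) [FiniteDimensional L M]
    [Algebra.IsSeparable L M] :
    Nat.card (Set.range fun σ : Gal(Ω/L) => (σ : Ω →ₐ[L] Ω).comp M.val) = Module.finrank L M := by
  have := IsAlgClosure.isAlgClosed L (K := Ω)
  rw [(comp_val_surjective M).range_eq, Nat.card_univ,
    AlgHom.natCard_of_splits L M Ω fun _ => IsAlgClosed.splits _]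

section GaloisAction

variable {k : Type} [Field k] {W : WeierstrassCurve k}

theorem WeierstrassCurve.Affine.Point.map_eq_map_iff_eqOn_ptField {f g : kbar k →ₐ[k] kbar k}
    {R : (W.toAffine.baseChange (kbar k)).Point} :
    Point.map (W' := W.toAffine) f R = Point.map (W' := W.toAffine) g R ↔
      Set.EqOn f g (ptField W R) := by
  cases R with
  | zero =>
    refine ⟨fun _ z hz => ?_, fun _ => rfl⟩
    obtain ⟨w, rfl⟩ := mem_bot.mp hz
    rw [AlgHom.commutes, AlgHom.commutes]
  | some h =>
    rw [Point.map_some, Point.map_some, Point.some.injEq, ptField, eqOn_adjoin_iff,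
      Set.insert_eq, Set.eqOn_union, Set.eqOn_singleton, Set.eqOn_singleton]

instance ptField.finiteDimensional (R : (W.toAffine.baseChange (kbar k)).Point) :
    FiniteDimensional k (ptField W R) := by
  cases R with
  | zero => exact inferInstanceAs (FiniteDimensional k (⊥ : IntermediateField k (kbar k)))
  | some => exact finiteDimensional_adjoin fun x _ => Algebra.IsIntegral.isIntegral x

variable (L : IntermediateField k (kbar k))

instance : IsAlgClosure L (kbar k) := ⟨inferInstance, Algebra.IsAlgebraic.tower_top (K := k) L⟩

noncomputable instance : DistribMulAction Gal(kbar k/L) (W.toAffine.baseChange (kbar k)).Point where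
  smul σ := Point.map (W' := W.toAffine) ((σ : kbar k →ₐ[L] kbar k).restrictScalars k)
  one_smul R := by cases R <;> rfl
  mul_smul σ τ R := by cases R <;> rfl
  smul_zero _ := rfl
  smul_add σ := map_add _

variable {L}

theorem galois_smul_eq_smul_iff {σ τ : Gal(kbar k/L)} {R : (W.toAffine.baseChange (kbar k)).Point} :
    σ • R = τ • R ↔ Set.EqOn σ τ (ptField W R) :=
  Point.map_eq_map_iff_eqOn_ptField

theorem galois_smul_eq_self {R : (W.toAffine.baseChange (kbar k)).Point} (hR : ptField W R ≤ L)
    (σ : Gal(kbar k/L)) : σ • R = R := by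
  conv_rhs => rw [← one_smul Gal(kbar k/L) R]
  exact galois_smul_eq_smul_iff.mpr fun z hz =>
    (σ.commutes ⟨z, hR hz⟩).trans (AlgEquiv.one_apply z).symm

theorem natCard_orbit_eq_extDeg [PerfectField k] [FiniteDimensional k L]
    (R : (W.toAffine.baseChange (kbar k)).Point) :
    Nat.card (MulAction.orbit Gal(kbar k/L) R) = extDeg L (ptField W R) := by
  set M := extendScalars (le_sup_left : L ≤ L ⊔ ptField W R)
  have hfib : ∀ σ τ : Gal(kbar k/L), σ • R = τ • R ↔
      (σ : kbar k →ₐ[L] kbar k).comp M.val = (τ : kbar k →ₐ[L] kbar k).comp M.val := by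
    intro σ τ
    set f := (σ : kbar k →ₐ[L] kbar k).restrictScalars k
    set g := (τ : kbar k →ₐ[L] kbar k).restrictScalars k
    have hL : Set.EqOn f g L := fun z hz => (σ.commutes ⟨z, hz⟩).trans (τ.commutes ⟨z, hz⟩).symm
    calc σ • R = τ • R ↔ Set.EqOn f g (ptField W R) := galois_smul_eq_smul_iff
      _ ↔ Set.EqOn f g ((L ⊔ ptField W R : IntermediateField k (kbar k)) : Set (kbar k)) := by
          rw [sup_def, eqOn_adjoin_iff, Set.eqOn_union, and_iff_right hL]
      _ ↔ (σ : kbar k →ₐ[L] kbar k).comp M.val = (τ : kbar k →ₐ[L] kbar k).comp M.val :=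
          ⟨fun h => AlgHom.ext fun m => h m.2, fun h z hz => DFunLike.congr_fun h ⟨z, hz⟩⟩
  exact (Nat.card_range_eq_of_forall_eq_iff hfib).trans (AlgEquiv.natCard_range_comp_val M)

end GaloisAction

namespace SepIsogeny

variable {k : Type} [Field k] {W₂ W₁ W₀ : WeierstrassCurve k} {ℓ ℓ₀ ℓ₁ : ℕ}

theorem map_galois_smul (φ : SepIsogeny W₁ W₀ ℓ) {L : IntermediateField k (kbar k)}
    (σ : Gal(kbar k/L)) (R : (W₁.toAffine.baseChange (kbar k)).Point) :
    φ.hom (σ • R) = σ • φ.hom R :=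
  φ.equivariant _ R

theorem map_ker_comp (φ₀ : SepIsogeny W₁ W₀ ℓ₀) (φ₁ : SepIsogeny W₂ W₁ ℓ₁) :
    (φ₀.hom.comp φ₁.hom).ker.map φ₁.hom = φ₀.hom.ker := by
  rw [← AddMonoidHom.comap_ker, AddSubgroup.map_comap_eq_self_of_surjective φ₁.surj]

theorem ker_le_ker_comp (φ₀ : SepIsogeny W₁ W₀ ℓ₀) (φ₁ : SepIsogeny W₂ W₁ ℓ₁) :
    φ₁.hom.ker ≤ (φ₀.hom.comp φ₁.hom).ker :=
  AddMonoidHom.ker_le_comap φ₁.hom φ₀.hom.ker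

theorem natCard_ker_comp (φ₀ : SepIsogeny W₁ W₀ ℓ₀) (φ₁ : SepIsogeny W₂ W₁ ℓ₁) :
    Nat.card (φ₀.hom.comp φ₁.hom).ker = ℓ₀ * ℓ₁ := by
  rw [AddSubgroup.card_eq_card_map_mul_card_ker φ₁.hom (ker_le_ker_comp φ₀ φ₁),
    map_ker_comp, φ₀.card_ker, φ₁.card_ker]

end SepIsogeny

/-- **main theorem.** Let `φ₀ : E₁ → E₀` and `φ₁ : E₂ → E₁` be separable
isogenies of degrees `ℓ₀`, `ℓ₁` over a finite field `k`, with every prime factor of `ℓ₁`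
dividing `ℓ₀`.  Fix `P ∈ E₀(k̄)` and assume `ker (φ₀ ∘ φ₁)` is cyclic with all its points
`k(P)`-rational.  Then every `Q ∈ (φ₀ ∘ φ₁)⁻¹(P)` with `[k(φ₁(Q)) : k(P)] = ℓ₀` satisfies
`[k(Q) : k(P)] = ℓ₀ℓ₁`. -/
theorem degree_of_composed_isogeny {k : Type} [Field k] [Fintype k]
    {W₂ W₁ W₀ : WeierstrassCurve k} {ℓ₀ ℓ₁ : ℕ}
    (φ₀ : SepIsogeny W₁ W₀ ℓ₀) (φ₁ : SepIsogeny W₂ W₁ ℓ₁)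
    (hdvd : ∀ p : ℕ, p.Prime → p ∣ ℓ₁ → p ∣ ℓ₀) (P : (W₀.toAffine.baseChange (kbar k)).Point)
    (hcyc : IsAddCyclic (φ₀.hom.comp φ₁.hom).ker)
    (hrat : ∀ F ∈ (φ₀.hom.comp φ₁.hom).ker, ptField W₂ F ≤ ptField W₀ P) :
    ∀ Q : (W₂.toAffine.baseChange (kbar k)).Point, φ₀.hom (φ₁.hom Q) = P →
      extDeg (ptField W₀ P) (ptField W₁ (φ₁.hom Q)) = ℓ₀ →
      extDeg (ptField W₀ P) (ptField W₂ Q) = ℓ₀ * ℓ₁ := by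
  intro Q hQ hdeg
  set L := ptField W₀ P
  set K := (φ₀.hom.comp φ₁.hom).ker
  have hQK : ∀ σ : Gal(kbar k/L), σ • Q - Q ∈ K := fun σ => by
    change φ₀.hom (φ₁.hom (σ • Q - Q)) = 0
    rw [map_sub, map_sub, φ₁.map_galois_smul, φ₀.map_galois_smul, hQ,
      galois_smul_eq_self le_rfl, sub_self]
  have hfix : ∀ σ τ : Gal(kbar k/L), σ • (τ • Q - Q) = τ • Q - Q := fun σ τ =>
    galois_smul_eq_self (hrat _ (hQK τ)) σ
  set c := smulSubHom Q hfix
  have hrange_le : c.range ≤ K := by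
    rintro _ ⟨σ, rfl⟩
    exact hQK σ
  have hℓ₀ : ℓ₀ ≠ 0 := hdeg ▸ (extDeg_pos _ _).ne'
  have hℓ₁ : ℓ₁ ≠ 0 := Nat.ne_zero_of_forall_prime_dvd_imp_dvd hℓ₀ hdvd
  have : Finite K := Nat.finite_of_card_ne_zero (by rw [φ₀.natCard_ker_comp]; positivity)
  have hmap : Nat.card (K.map φ₁.hom) ≤ Nat.card (c.range.map φ₁.hom) := by
    rw [φ₀.map_ker_comp, φ₀.card_ker, ← natCard_orbit_map_eq _ _ _ φ₁.map_galois_smul,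
      natCard_orbit_eq_extDeg, hdeg]
  have hrange : c.range = K := AddSubgroup.eq_of_card_map_ge_of_isAddCyclic φ₁.hom hrange_le
    (φ₀.ker_le_ker_comp φ₁) hmap (by rwa [φ₀.map_ker_comp, φ₀.card_ker, φ₁.card_ker])
  rw [← natCard_orbit_eq_extDeg, natCard_orbit_eq_natCard_range Q hfix, hrange, φ₀.natCard_ker_comp]
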